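/- For every n ≥ 1 and 0 ≤ a ≤ n, the map d_{a,n} : V_a^n → (V_{n−a}^n)^* is U_q(sl_n)-equivariant: d_{a,n}(Z·v) = Z·d_{a,n}(v) for all Z ∈ U_q(sl_n) and v ∈ V_a^n, where (V_{n−a}^n)^* carries the antipode-twisted dual module structure. -/

import Mathlib

noncomputable section

open scoped TensorProduct

set_option maxHeartbeats 1000000
set_option synthInstance.maxHeartbeats 400000

/-- The ground field `𝔸 = ℚ(q)`. -/
abbrev A : Type := RatFunc ℚ

/-- The element `q ∈ 𝔸`. -/
def qq : A := RatFunc.X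

/-- The set of `a`-element subsets of `{0, 1, …, n-1}` (a model for the
`a`-element subsets of `{1, …, n}`), the basis of `V_a^n`. -/
abbrev BS (n a : ℕ) : Type := {s : Finset ℕ // s ⊆ Finset.range n ∧ s.card = a}

instance BS.fintype (n a : ℕ) : Fintype (BS n a) :=
  Fintype.subtype ((Finset.range n).powerset.filter fun s => s.card = a) (by
    intro s
    simp [Finset.mem_powerset, Finset.mem_filter])

/-- The fundamental representation `V_a^n`, as the `𝔸`-vector space with basis the
`a`-element subsets of an `n`-element set. -/
abbrev V (n a : ℕ) : Type := BS n a → A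

/-- `i₋₁ : V_{a-1}^{n-1} → V_a^n` (here with indices shifted:
`iminus n a : V_a^n → V_{a+1}^{n+1}`), the inclusion of the summand of subsets containing
the new top element `n`. -/
def iminus (n a : ℕ) : V n a →ₗ[A] V (n+1) (a+1) where
  toFun f s := if h : n ∈ s.1 then
      f ⟨s.1.erase n, by
        constructor
        · intro x hx
          have hx' := Finset.mem_erase.mp hx
          have hx2 := s.2.1 hx'.2
          simp only [Finset.mem_range] at hx2 ⊢
          omega
        · rw [Finset.card_erase_of_mem h, s.2.2]; omega⟩
    else 0
  map_add' f g := by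
    funext s
    simp only [Pi.add_apply]
    by_cases h : n ∈ s.1 <;> simp [h]
  map_smul' c f := by
    funext s
    simp only [Pi.smul_apply, smul_eq_mul, RingHom.id_apply]
    by_cases h : n ∈ s.1 <;> simp [h]

/-- `i₀ : V_a^{n-1} → V_a^n` (as `izero n a : V_a^n → V_a^{n+1}`), the inclusion of the
summand of subsets not containing the new top element. -/
def izero (n a : ℕ) : V n a →ₗ[A] V (n+1) a where
  toFun f s := if h : n ∈ s.1 then 0 else
      f ⟨s.1, by
        refine ⟨fun x hx => ?_, s.2.2⟩
        have hx2 := s.2.1 hx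
        simp only [Finset.mem_range] at hx2 ⊢
        rcases Nat.lt_succ_iff_lt_or_eq.mp hx2 with h' | h'
        · exact h'
        · exact absurd (h' ▸ hx) h⟩
  map_add' f g := by
    funext s
    simp only [Pi.add_apply]
    by_cases h : n ∈ s.1 <;> simp [h]
  map_smul' c f := by
    funext s
    simp only [Pi.smul_apply, smul_eq_mul, RingHom.id_apply]
    by_cases h : n ∈ s.1 <;> simp [h]

/-- `p₋₁ : V_a^n → V_{a-1}^{n-1}` (as `pminus n a : V_{a+1}^{n+1} → V_a^n`), the projection
onto the summand of subsets containing the top element. -/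
def pminus (n a : ℕ) : V (n+1) (a+1) →ₗ[A] V n a where
  toFun f t := f ⟨insert n t.1, by
    have hn : n ∉ t.1 := fun h => by
      have := t.2.1 h; simp [Finset.mem_range] at this
    constructor
    · intro x hx
      rcases Finset.mem_insert.mp hx with rfl | hx
      · simp
      · have := t.2.1 hx; simp only [Finset.mem_range] at this ⊢; omega
    · rw [Finset.card_insert_of_notMem hn, t.2.2]⟩
  map_add' f g := rfl
  map_smul' c f := rfl

/-- `p₀ : V_a^n → V_a^{n-1}` (as `pzero n a : V_a^{n+1} → V_a^n`), the projection onto the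
summand of subsets not containing the top element. -/
def pzero (n a : ℕ) : V (n+1) a →ₗ[A] V n a where
  toFun f t := f ⟨t.1, by
    refine ⟨fun x hx => ?_, t.2.2⟩
    have := t.2.1 hx; simp only [Finset.mem_range] at this ⊢; omega⟩
  map_add' f g := rfl
  map_smul' c f := rfl

/-- The diagonal operator on `V_a^n` acting by the scalar `x` on basis subsets containing `m`
and by `y` on those not containing `m`; for `m = n-1` this is `x • i₋₁ p₋₁ + y • i₀ p₀`. -/
def diagOp (n a m : ℕ) (x y : A) : Module.End A (V n a) where
  toFun f s := (if m ∈ s.1 then x else y) * f s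
  map_add' f g := by
    funext s
    simp only [Pi.add_apply]
    ring
  map_smul' c f := by
    funext s
    simp only [Pi.smul_apply, smul_eq_mul, RingHom.id_apply]
    ring

/-- The recursively defined action of the generator `X_i^+` on `V_a^n`
(`XpOp n a i`, where `i` is the literal subscript, `1 ≤ i ≤ n-1`). -/
def XpOp : (n a i : ℕ) → Module.End A (V n a)
  | 0, _, _ => 0
  | 1, _, _ => 0
  | _+2, 0, _ => 0
  | n+2, a+1, i =>
    if a + 1 = n + 2 then 0
    else if i = n + 1 then
      (iminus (n+1) a) ∘ₗ (izero n a) ∘ₗ (pminus n a) ∘ₗ (pzero (n+1) (a+1))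
    else
      (iminus (n+1) a) ∘ₗ (XpOp (n+1) a i) ∘ₗ (pminus (n+1) a)
      + (izero (n+1) (a+1)) ∘ₗ (XpOp (n+1) (a+1) i) ∘ₗ (pzero (n+1) (a+1))

/-- The recursively defined action of the generator `X_i^-` on `V_a^n`. -/
def XmOp : (n a i : ℕ) → Module.End A (V n a)
  | 0, _, _ => 0
  | 1, _, _ => 0
  | _+2, 0, _ => 0
  | n+2, a+1, i =>
    if a + 1 = n + 2 then 0
    else if i = n + 1 then
      (izero (n+1) (a+1)) ∘ₗ (iminus n a) ∘ₗ (pzero n a) ∘ₗ (pminus (n+1) a)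
    else
      (iminus (n+1) a) ∘ₗ (XmOp (n+1) a i) ∘ₗ (pminus (n+1) a)
      + (izero (n+1) (a+1)) ∘ₗ (XmOp (n+1) (a+1) i) ∘ₗ (pzero (n+1) (a+1))

/-- The recursively defined action of the generator `K_i` on `V_a^n`.  The middle factors
`diagOp … 1 q` and `diagOp … q⁻¹ 1` are the operators `i₋₁ p₋₁ + q i₀ p₀` and
`q⁻¹ i₋₁ p₋₁ + i₀ p₀` of the recursion. -/
def KOp : (n a i : ℕ) → Module.End A (V n a)
  | 0, _, _ => 1
  | 1, _, _ => 1
  | _+2, 0, _ => 1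
  | n+2, a+1, i =>
    if a + 1 = n + 2 then 1
    else if i = n + 1 then
      (iminus (n+1) a) ∘ₗ (diagOp (n+1) a n 1 qq) ∘ₗ (pminus (n+1) a)
      + (izero (n+1) (a+1)) ∘ₗ (diagOp (n+1) (a+1) n qq⁻¹ 1) ∘ₗ (pzero (n+1) (a+1))
    else
      (iminus (n+1) a) ∘ₗ (KOp (n+1) a i) ∘ₗ (pminus (n+1) a)
      + (izero (n+1) (a+1)) ∘ₗ (KOp (n+1) (a+1) i) ∘ₗ (pzero (n+1) (a+1))

/-- The recursively defined action of `K_i⁻¹` on `V_a^n` (the inverse of `KOp`),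
given by the same recursion with `q` and `q⁻¹` interchanged. -/
def KinvOp : (n a i : ℕ) → Module.End A (V n a)
  | 0, _, _ => 1
  | 1, _, _ => 1
  | _+2, 0, _ => 1
  | n+2, a+1, i =>
    if a + 1 = n + 2 then 1
    else if i = n + 1 then
      (iminus (n+1) a) ∘ₗ (diagOp (n+1) a n 1 qq⁻¹) ∘ₗ (pminus (n+1) a)
      + (izero (n+1) (a+1)) ∘ₗ (diagOp (n+1) (a+1) n qq 1) ∘ₗ (pzero (n+1) (a+1))
    else
      (iminus (n+1) a) ∘ₗ (KinvOp (n+1) a i) ∘ₗ (pminus (n+1) a)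
      + (izero (n+1) (a+1)) ∘ₗ (KinvOp (n+1) (a+1) i) ∘ₗ (pzero (n+1) (a+1))
/-! ### The quantum group `U_q(sl_n)` by generators and relations.

We present the algebra with `m = n - 1` generators of each kind `K i, K i⁻¹, X i⁺, X i⁻`,
indexed by `i : Fin m` (so `i` corresponds to the subscript `i + 1 ∈ {1, …, n-1}`). -/

/-- Generators of `U_q(sl_n)` (with `m = n-1`). -/
inductive UqGen (m : ℕ) : Type
  | K : Fin m → UqGen m
  | Kinv : Fin m → UqGen m
  | Xp : Fin m → UqGen m
  | Xm : Fin m → UqGen m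

/-- The free `𝔸`-algebra on the generators. -/
abbrev FA (m : ℕ) : Type := FreeAlgebra A (UqGen m)

namespace FA
variable {m : ℕ}
def K (i : Fin m) : FA m := FreeAlgebra.ι A (UqGen.K i)
def Kinv (i : Fin m) : FA m := FreeAlgebra.ι A (UqGen.Kinv i)
def Xp (i : Fin m) : FA m := FreeAlgebra.ι A (UqGen.Xp i)
def Xm (i : Fin m) : FA m := FreeAlgebra.ι A (UqGen.Xm i)
end FA

/-- The Cartan integers `(i,j)` of type `A_m`: `2` if `i = j`, `-1` if `|i-j| = 1`,
`0` if `|i-j| ≥ 2`. -/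
def cart {m : ℕ} (i j : Fin m) : ℤ :=
  if i = j then 2 else if (i : ℕ) + 1 = j ∨ (j : ℕ) + 1 = i then -1 else 0

/-- The defining relations of `U_q(sl_n)`. -/
inductive uqRel (m : ℕ) : FA m → FA m → Prop
  | KKinv (i : Fin m) : uqRel m (FA.K i * FA.Kinv i) 1
  | KinvK (i : Fin m) : uqRel m (FA.Kinv i * FA.K i) 1
  | KK (i j : Fin m) : uqRel m (FA.K i * FA.K j) (FA.K j * FA.K i)
  | KXp (i j : Fin m) : uqRel m (FA.K i * FA.Xp j) (qq ^ (cart i j) • (FA.Xp j * FA.K i))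
  | KXm (i j : Fin m) : uqRel m (FA.K i * FA.Xm j) (qq ^ (-cart i j) • (FA.Xm j * FA.K i))
  | XpXm (i j : Fin m) :
      uqRel m (FA.Xp i * FA.Xm j - FA.Xm j * FA.Xp i)
        (if i = j then (qq - qq⁻¹)⁻¹ • (FA.K i - FA.Kinv i) else 0)
  | XpXp (i j : Fin m) (h : (i : ℕ) + 2 ≤ j ∨ (j : ℕ) + 2 ≤ i) :
      uqRel m (FA.Xp i * FA.Xp j) (FA.Xp j * FA.Xp i)
  | XmXm (i j : Fin m) (h : (i : ℕ) + 2 ≤ j ∨ (j : ℕ) + 2 ≤ i) :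
      uqRel m (FA.Xm i * FA.Xm j) (FA.Xm j * FA.Xm i)
  | serreP (i j : Fin m) (h : (i : ℕ) + 1 = j ∨ (j : ℕ) + 1 = i) :
      uqRel m (FA.Xp i ^ 2 * FA.Xp j - (qq + qq⁻¹) • (FA.Xp i * FA.Xp j * FA.Xp i)
        + FA.Xp j * FA.Xp i ^ 2) 0
  | serreM (i j : Fin m) (h : (i : ℕ) + 1 = j ∨ (j : ℕ) + 1 = i) :
      uqRel m (FA.Xm i ^ 2 * FA.Xm j - (qq + qq⁻¹) • (FA.Xm i * FA.Xm j * FA.Xm i)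
        + FA.Xm j * FA.Xm i ^ 2) 0

/-- The quantum group `U_q(sl_{m+1})`, presented by generators and relations.
For `U_q(sl_n)` take `m = n - 1`. -/
abbrev Uq (m : ℕ) : Type := RingQuot (uqRel m)

namespace Uq
variable {m : ℕ}
/-- The generator `K_{i+1}` of `U_q(sl_n)`. -/
def K (i : Fin m) : Uq m := RingQuot.mkAlgHom A (uqRel m) (FA.K i)
/-- The generator `K_{i+1}⁻¹` of `U_q(sl_n)`. -/
def Kinv (i : Fin m) : Uq m := RingQuot.mkAlgHom A (uqRel m) (FA.Kinv i)
/-- The generator `X_{i+1}^+` of `U_q(sl_n)`. -/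
def Xp (i : Fin m) : Uq m := RingQuot.mkAlgHom A (uqRel m) (FA.Xp i)
/-- The generator `X_{i+1}^-` of `U_q(sl_n)`. -/
def Xm (i : Fin m) : Uq m := RingQuot.mkAlgHom A (uqRel m) (FA.Xm i)
end Uq
/-! ### The duality maps `d_{a,n}`, triple invariants, and the pivotal elements `τ`. -/

/-- The sum-of-coefficients functional on `V_a^n`. -/
def sumF (n a : ℕ) : V n a →ₗ[A] A where
  toFun f := ∑ s : BS n a, f s
  map_add' f g := by simp [Finset.sum_add_distrib]
  map_smul' c f := by simp [Finset.mul_sum]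

/-- The "trivial" map `V_a^n → (V_c^n)^*`; when `V_a^n` and `V_c^n` are one-dimensional
(`a = 0` or `a = n`, and correspondingly for `c`) it sends the basis vector to the dual
basis vector.  Used for the base cases of `d_{a,n}`. -/
def dtriv (n a c : ℕ) : V n a →ₗ[A] Module.Dual A (V n c) :=
  LinearMap.smulRight (sumF n a) (sumF n c)

/-- The map `d_{a,n} : V_a^n → (V_{n-a}^n)^*`, defined recursively by
`d_{a,n} = i₀ ∘ d_{a-1,n-1} ∘ p₋₁ + (-q)^{-a} i₋₁ ∘ d_{a,n-1} ∘ p₀`, with both base cases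
sending the basis vector to the dual basis vector.  Here `dmap n a c` has target
`(V_c^n)^*`, to be used with `c = n - a`. -/
def dmap : (n a c : ℕ) → (V n a →ₗ[A] Module.Dual A (V n c))
  | 0, a, c => dtriv 0 a c
  | n+1, 0, c => dtriv (n+1) 0 c
  | n+1, a+1, c =>
    if a + 1 = n + 1 then dtriv (n+1) (a+1) c
    else
      match c with
      | 0 => 0
      | c+1 =>
        (pzero n (c+1)).dualMap ∘ₗ (dmap n a (c+1)) ∘ₗ (pminus n a)
        + ((-qq) ^ (a+1))⁻¹ •
            ((pminus n c).dualMap ∘ₗ (dmap n (a+1) c) ∘ₗ (pzero n (a+1)))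

section voutvin

open TensorProduct

/-- First term of the recursion for `v_out`: `(-1)^c q^{b+c} (i₋₁ ⊗ i₀ ⊗ i₀)`. -/
def vterm1 (n a b c : ℕ) (v : V n a ⊗[A] (V n b ⊗[A] V n c)) :
    V (n+1) (a+1) ⊗[A] (V (n+1) b ⊗[A] V (n+1) c) :=
  ((-1 : A)^c * qq^(b+c)) •
    (TensorProduct.map (iminus n a) (TensorProduct.map (izero n b) (izero n c)) v)

/-- Second term of the recursion for `v_out`: `(-1)^a q^c (i₀ ⊗ i₋₁ ⊗ i₀)`. -/
def vterm2 (n a b c : ℕ) (v : V n a ⊗[A] (V n b ⊗[A] V n c)) :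
    V (n+1) a ⊗[A] (V (n+1) (b+1) ⊗[A] V (n+1) c) :=
  ((-1 : A)^a * qq^c) •
    (TensorProduct.map (izero n a) (TensorProduct.map (iminus n b) (izero n c)) v)

/-- Third term of the recursion for `v_out`: `(-1)^b (i₀ ⊗ i₀ ⊗ i₋₁)`. -/
def vterm3 (n a b c : ℕ) (v : V n a ⊗[A] (V n b ⊗[A] V n c)) :
    V (n+1) a ⊗[A] (V (n+1) b ⊗[A] V (n+1) (c+1)) :=
  ((-1 : A)^b) •
    (TensorProduct.map (izero n a) (TensorProduct.map (izero n b) (iminus n c)) v)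

/-- The triple invariant `v_out^n_{a,b,c} ∈ V_a^n ⊗ V_b^n ⊗ V_c^n` (intended for
`a + b + c = n`), defined by the recursion of Definition `defn:trivalent-vertices`,
omitting any term with a negative subscript. -/
def voutE : (n a b c : ℕ) → V n a ⊗[A] (V n b ⊗[A] V n c)
  | 0, _, _, _ => (fun _ => (1:A)) ⊗ₜ[A] ((fun _ => (1:A)) ⊗ₜ[A] (fun _ => (1:A)))
  | n+1, 0, 0, 0 => 0
  | n+1, a+1, 0, 0 => vterm1 n a 0 0 (voutE n a 0 0)
  | n+1, 0, b+1, 0 => vterm2 n 0 b 0 (voutE n 0 b 0)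
  | n+1, 0, 0, c+1 => vterm3 n 0 0 c (voutE n 0 0 c)
  | n+1, a+1, b+1, 0 =>
      vterm1 n a (b+1) 0 (voutE n a (b+1) 0) + vterm2 n (a+1) b 0 (voutE n (a+1) b 0)
  | n+1, a+1, 0, c+1 =>
      vterm1 n a 0 (c+1) (voutE n a 0 (c+1)) + vterm3 n (a+1) 0 c (voutE n (a+1) 0 c)
  | n+1, 0, b+1, c+1 =>
      vterm2 n 0 b (c+1) (voutE n 0 b (c+1)) + vterm3 n 0 (b+1) c (voutE n 0 (b+1) c)
  | n+1, a+1, b+1, c+1 =>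
      vterm1 n a (b+1) (c+1) (voutE n a (b+1) (c+1))
      + vterm2 n (a+1) b (c+1) (voutE n (a+1) b (c+1))
      + vterm3 n (a+1) (b+1) c (voutE n (a+1) (b+1) c)

/-- First term of the recursion for `v_in`: `(-1)^c (…) ∘ (p₋₁ ⊗ p₀ ⊗ p₀)`. -/
def wterm1 (n a b c : ℕ) (φ : V n a ⊗[A] (V n b ⊗[A] V n c) →ₗ[A] A) :
    V (n+1) (a+1) ⊗[A] (V (n+1) b ⊗[A] V (n+1) c) →ₗ[A] A :=
  ((-1 : A)^c) •
    (φ ∘ₗ TensorProduct.map (pminus n a) (TensorProduct.map (pzero n b) (pzero n c)))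

/-- Second term of the recursion for `v_in`: `(-1)^a q^{-a} (…) ∘ (p₀ ⊗ p₋₁ ⊗ p₀)`. -/
def wterm2 (n a b c : ℕ) (φ : V n a ⊗[A] (V n b ⊗[A] V n c) →ₗ[A] A) :
    V (n+1) a ⊗[A] (V (n+1) (b+1) ⊗[A] V (n+1) c) →ₗ[A] A :=
  ((-1 : A)^a * (qq^a)⁻¹) •
    (φ ∘ₗ TensorProduct.map (pzero n a) (TensorProduct.map (pminus n b) (pzero n c)))

/-- Third term of the recursion for `v_in`: `(-1)^b q^{-a-b} (…) ∘ (p₀ ⊗ p₀ ⊗ p₋₁)`. -/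
def wterm3 (n a b c : ℕ) (φ : V n a ⊗[A] (V n b ⊗[A] V n c) →ₗ[A] A) :
    V (n+1) a ⊗[A] (V (n+1) b ⊗[A] V (n+1) (c+1)) →ₗ[A] A :=
  ((-1 : A)^b * (qq^(a+b))⁻¹) •
    (φ ∘ₗ TensorProduct.map (pzero n a) (TensorProduct.map (pzero n b) (pminus n c)))

/-- The triple coinvariant `v_in^n_{a,b,c} : V_a^n ⊗ V_b^n ⊗ V_c^n → 𝔸` (intended for
`a + b + c = n`), defined recursively, omitting any term with a negative subscript. -/
def vinE : (n a b c : ℕ) → (V n a ⊗[A] (V n b ⊗[A] V n c) →ₗ[A] A)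
  | 0, a, b, c =>
      (LinearMap.mul' A A) ∘ₗ
        TensorProduct.map (sumF 0 a)
          ((LinearMap.mul' A A) ∘ₗ TensorProduct.map (sumF 0 b) (sumF 0 c))
  | n+1, 0, 0, 0 => 0
  | n+1, a+1, 0, 0 => wterm1 n a 0 0 (vinE n a 0 0)
  | n+1, 0, b+1, 0 => wterm2 n 0 b 0 (vinE n 0 b 0)
  | n+1, 0, 0, c+1 => wterm3 n 0 0 c (vinE n 0 0 c)
  | n+1, a+1, b+1, 0 =>
      wterm1 n a (b+1) 0 (vinE n a (b+1) 0) + wterm2 n (a+1) b 0 (vinE n (a+1) b 0)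
  | n+1, a+1, 0, c+1 =>
      wterm1 n a 0 (c+1) (vinE n a 0 (c+1)) + wterm3 n (a+1) 0 c (vinE n (a+1) 0 c)
  | n+1, 0, b+1, c+1 =>
      wterm2 n 0 b (c+1) (vinE n 0 b (c+1)) + wterm3 n 0 (b+1) c (vinE n 0 (b+1) c)
  | n+1, a+1, b+1, c+1 =>
      wterm1 n a (b+1) (c+1) (vinE n a (b+1) (c+1))
      + wterm2 n (a+1) b (c+1) (vinE n (a+1) b (c+1))
      + wterm3 n (a+1) (b+1) c (vinE n (a+1) (b+1) c)

end voutvin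

/-- The operator `∏_{j=1}^{n-1} K_j^j` on `V_a^n`. -/
def kjOp (n a : ℕ) : Module.End A (V n a) :=
  (List.ofFn fun i : Fin (n-1) => (KOp n a ((i : ℕ)+1)) ^ ((i : ℕ)+1)).prod

/-- The pivotal operator `τ_n = ∏_{j=1}^{n-1} K_j^{j(n-j)}` on `V_a^n`. -/
def tauOp (n a : ℕ) : Module.End A (V n a) :=
  (List.ofFn fun i : Fin (n-1) => (KOp n a ((i : ℕ)+1)) ^ (((i : ℕ)+1) * (n - ((i : ℕ)+1)))).prod

/-- The inverse pivotal operator `τ_n⁻¹ = ∏_{j=1}^{n-1} K_j^{-j(n-j)}` on `V_a^n`. -/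
def tauinvOp (n a : ℕ) : Module.End A (V n a) :=
  (List.ofFn fun i : Fin (n-1) => (KinvOp n a ((i : ℕ)+1)) ^ (((i : ℕ)+1) * (n - ((i : ℕ)+1)))).prod

/-- The element `τ_n = ∏_{j=1}^{n-1} K_j^{j(n-j)} ∈ U_q(sl_n)`. -/
def tauU (n : ℕ) : Uq (n-1) :=
  (List.ofFn fun i : Fin (n-1) => (Uq.K i) ^ (((i : ℕ)+1) * (n - ((i : ℕ)+1)))).prod

/-- The Cartan integers for literal subscripts `i, j ∈ {1, …, n-1}`. -/
def cartN (i j : ℕ) : ℤ :=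
  if i = j then 2 else if i + 1 = j ∨ j + 1 = i then -1 else 0

/-!
Subsets are taken in `{0, …, n-1}`, so the generators with subscript `k + 1` only see the
elements `k` and `k + 1`.  Unwinding the recursions, every generator acts on the basis of
subsets by a monomial matrix: `K_{k+1}^{±1}` scales `e_s` by `q^{±([k+1 ∈ s] - [k ∈ s])}`, and
`X_{k+1}^+` (resp. `X_{k+1}^-`) replaces `k` by `k + 1` (resp. `k + 1` by `k`) in `s`.
Likewise `d_{a,n}(v)(w) = ∑_s (-q)^{E(s)} v_s w_{sᶜ}` for an explicit exponent `E`.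
Equivariance for a generator then becomes an identity for each pair `(s, sᶜ)` of complementary
subsets, whose only non-formal input is that replacing `k` by `k + 1` multiplies `(-q)^{E(s)}`
by `-q`.  The `Z` satisfying the identity form a subalgebra, so the generators suffice.
-/

section Equivariance

open Finset

lemma qq_ne_zero : qq ≠ 0 := RatFunc.X_ne_zero

lemma map_swap_of_mem_of_notMem {i j : ℕ} {s : Finset ℕ} (hi : i ∈ s) (hj : j ∉ s) :
    s.map (Equiv.swap i j).toEmbedding = insert j (s.erase i) := by
  ext x
  simp only [mem_map_equiv, Equiv.symm_swap, Equiv.swap_apply_def, mem_insert, mem_erase]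
  grind

lemma swap_apply_of_add_two_le (k : ℕ) : ∀ i, k + 2 ≤ i → Equiv.swap k (k+1) i = i :=
  fun _ hi => Equiv.swap_apply_of_ne_of_ne (by omega) (by omega)

namespace BS

variable {n a : ℕ}

lemma coe_eq_empty (s : BS n 0) : s.1 = ∅ := card_eq_zero.mp s.2.2

lemma coe_eq_range (s : BS n n) : s.1 = range n :=
  eq_of_subset_of_card_le s.2.1 (by rw [card_range, s.2.2])

instance uniqueZero (n : ℕ) : Unique (BS n 0) where
  default := ⟨∅, by simp⟩
  uniq s := Subtype.ext (coe_eq_empty s)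

instance uniqueSelf (n : ℕ) : Unique (BS n n) where
  default := ⟨range n, by simp⟩
  uniq s := Subtype.ext (coe_eq_range s)

lemma map_range_of_fix {π : Equiv.Perm ℕ} (hπ : ∀ i, n ≤ i → π i = i) :
    (range n).map π.toEmbedding = range n := by
  refine eq_of_subset_of_card_le (fun x hx => ?_) (by rw [card_map])
  obtain ⟨y, hy, rfl⟩ := mem_map.mp hx
  by_contra h
  have hfix : π (π y) = π y := hπ _ (not_lt.mp (mt mem_range.mpr h))
  rw [Equiv.coe_toEmbedding, π.injective hfix] at h
  exact h hy

def perm (π : Equiv.Perm ℕ) (hπ : ∀ i, n ≤ i → π i = i) : Equiv.Perm (BS n a) :=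
  (Equiv.finsetCongr π).subtypeEquiv fun s => by
    rw [Equiv.finsetCongr_apply, card_map, ← map_subset_map (f := π.toEmbedding),
      map_range_of_fix hπ]

@[simp] lemma coe_perm (π : Equiv.Perm ℕ) (hπ : ∀ i, n ≤ i → π i = i) (s : BS n a) :
    (perm π hπ s).1 = s.1.map π.toEmbedding := rfl

@[simp] lemma perm_refl (s : BS n a) : perm (Equiv.refl ℕ) (fun i _ => Equiv.refl_apply i) s = s :=
  Subtype.ext (by simp)

lemma perm_perm {π : Equiv.Perm ℕ} (hπ : ∀ i, n ≤ i → π i = i) (hinv : Function.Involutive π)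
    (s : BS n a) : perm π hπ (perm π hπ s) = s :=
  Subtype.ext (by simp [map_map, hinv.comp_self])

def compl {c : ℕ} (hac : a + c = n) (s : BS n a) : BS n c :=
  ⟨range n \ s.1, sdiff_subset, by rw [card_sdiff_of_subset s.2.1, card_range, s.2.2]; omega⟩

@[simp] lemma coe_compl {c : ℕ} (hac : a + c = n) (s : BS n a) :
    (compl hac s).1 = range n \ s.1 := rfl

lemma compl_perm {c : ℕ} (hac : a + c = n) {π : Equiv.Perm ℕ} (hπ : ∀ i, n ≤ i → π i = i)
    (s : BS n a) : compl hac (perm π hπ s) = perm π hπ (compl hac s) :=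
  Subtype.ext (by simp only [coe_compl, coe_perm, Finset.map_sdiff, map_range_of_fix hπ])

def consTop (t : BS n a) : BS (n+1) (a+1) :=
  ⟨insert n t.1, insert_subset_insert n t.2.1 |>.trans (by simp [range_add_one]),
    by rw [card_insert_of_notMem fun h => by simpa using t.2.1 h, t.2.2]⟩

def castSucc (t : BS n a) : BS (n+1) a :=
  ⟨t.1, t.2.1.trans (range_subset_range.mpr n.le_succ), t.2.2⟩

lemma compl_consTop {c : ℕ} (hac : a + c = n) (t : BS n a) :
    compl (by omega : a + 1 + c = n + 1) t.consTop = (compl hac t).castSucc := by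
  ext x
  by_cases hx : x ∈ t.1
  · simp [consTop, castSucc, hx]
  · simp only [coe_compl, consTop, castSucc, mem_sdiff, mem_range, mem_insert, hx, or_false,
      not_false_eq_true, and_true]
    omega

lemma compl_castSucc {c : ℕ} (hac : a + 1 + c = n) (t : BS n (a+1)) :
    compl (by omega : a + 1 + (c + 1) = n + 1) t.castSucc = (compl hac t).consTop := by
  ext x
  by_cases hx : x ∈ t.1
  · simp only [coe_compl, consTop, castSucc, mem_sdiff, mem_range, mem_insert, hx,
      not_true_eq_false, and_false, or_false, false_iff]
    exact (mem_range.mp (t.2.1 hx)).ne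
  · simp only [coe_compl, consTop, castSucc, mem_sdiff, mem_range, mem_insert, hx,
      not_false_eq_true, and_true]
    omega

lemma sum_succ_succ {M : Type*} [AddCommMonoid M] (F : BS (n+1) (a+1) → M) :
    ∑ s, F s = ∑ t : BS n a, F t.consTop + ∑ t : BS n (a+1), F t.castSucc := by
  have hn (t : Finset ℕ) (ht : t ⊆ range n) : n ∉ t := fun h => by simpa using ht h
  have hbij : Function.Bijective
      (Sum.elim consTop castSucc : BS n a ⊕ BS n (a+1) → BS (n+1) (a+1)) := by
    refine ⟨?_, fun s => ?_⟩
    · rintro (t | t) (u | u) h <;>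
        simp only [Sum.elim_inl, Sum.elim_inr, consTop, castSucc, Subtype.mk.injEq] at h
      · exact congrArg _ (Subtype.ext (by
          rw [← erase_insert (hn _ t.2.1), h, erase_insert (hn _ u.2.1)]))
      · exact absurd (h ▸ mem_insert_self n t.1) (hn _ u.2.1)
      · exact absurd (h.symm ▸ mem_insert_self n u.1) (hn _ t.2.1)
      · exact congrArg _ (Subtype.ext h)
    · have hlt {x : ℕ} (hx : x ∈ s.1) (hxn : x ≠ n) : x < n :=
        lt_of_le_of_ne (Nat.lt_succ_iff.mp (mem_range.mp (s.2.1 hx))) hxn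
      by_cases hns : n ∈ s.1
      · refine ⟨Sum.inl ⟨s.1.erase n, fun x hx => ?_, ?_⟩, Subtype.ext (insert_erase hns)⟩
        · exact mem_range.mpr (hlt (mem_of_mem_erase hx) (ne_of_mem_erase hx))
        · rw [card_erase_of_mem hns, s.2.2, Nat.add_sub_cancel]
      · exact ⟨Sum.inr ⟨s.1, fun x hx => mem_range.mpr (hlt hx (by rintro rfl; exact hns hx)),
          s.2.2⟩, rfl⟩
  rw [← hbij.sum_comp F, Fintype.sum_sum_type]
  rfl

end BS

def monomialOp (n a : ℕ) (π : Equiv.Perm ℕ) (hπ : ∀ i, n ≤ i → π i = i) (c : Finset ℕ → A) :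
    Module.End A (V n a) where
  toFun f s := c s.1 * f (BS.perm π hπ s)
  map_add' f g := by ext s; simp [mul_add]
  map_smul' x f := by ext s; simp [mul_left_comm]

@[simp] lemma monomialOp_apply (n a : ℕ) (π : Equiv.Perm ℕ) (hπ : ∀ i, n ≤ i → π i = i)
    (c : Finset ℕ → A) (f : V n a) (s : BS n a) :
    monomialOp n a π hπ c f s = c s.1 * f (BS.perm π hπ s) := rfl

lemma monomialOp_eq_smul_one {n a : ℕ} [Subsingleton (BS n a)] {π : Equiv.Perm ℕ}
    (hπ : ∀ i, n ≤ i → π i = i) {c : Finset ℕ → A} {x : A} (hc : ∀ s : BS n a, c s.1 = x) :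
    monomialOp n a π hπ c = x • 1 := by
  refine LinearMap.ext fun f => funext fun s => ?_
  simp [hc, Subsingleton.elim (BS.perm π hπ s) s]

lemma monomialOp_succ_succ {m b : ℕ} {π : Equiv.Perm ℕ} (hπ : ∀ i, m ≤ i → π i = i)
    (hπ' : ∀ i, m + 1 ≤ i → π i = i) {c : Finset ℕ → A} (hc : ∀ s, c (s.erase m) = c s) :
    monomialOp (m+1) (b+1) π hπ' c =
      iminus m b ∘ₗ monomialOp m b π hπ c ∘ₗ pminus m b
      + izero m (b+1) ∘ₗ monomialOp m (b+1) π hπ c ∘ₗ pzero m (b+1) := by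
  refine LinearMap.ext fun f => funext fun s => ?_
  by_cases hm : m ∈ s.1
  · have hs : insert m ((s.1.erase m).map π.toEmbedding) = s.1.map π.toEmbedding := by
      rw [map_erase, Equiv.coe_toEmbedding, hπ m le_rfl,
        insert_erase (mem_map_equiv.mpr (by rwa [π.symm_apply_eq.mpr (hπ m le_rfl).symm]))]
    simp only [LinearMap.add_apply, LinearMap.comp_apply, iminus, izero, pminus,
      LinearMap.coe_mk, AddHom.coe_mk, Pi.add_apply, dif_pos hm, add_zero, monomialOp_apply,
      hc, BS.coe_perm]
    exact congrArg (c s.1 * f ·) (Subtype.ext hs.symm)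
  · simp only [LinearMap.add_apply, LinearMap.comp_apply, iminus, izero, pzero,
      LinearMap.coe_mk, AddHom.coe_mk, Pi.add_apply, dif_neg hm, zero_add, monomialOp_apply]
    rfl

lemma eq_monomialOp_of_recursion {k : ℕ} {π : Equiv.Perm ℕ} (hπ : ∀ i, k + 2 ≤ i → π i = i)
    {c : Finset ℕ → A} (hc : ∀ m s, k + 2 ≤ m → c (s.erase m) = c s)
    (T : ∀ n a, Module.End A (V n a))
    (hbase : ∀ n a (hn : k + 2 ≤ n), (a = 0 ∨ a = n) →
      T n a = monomialOp n a π (fun i hi => hπ i (hn.trans hi)) c)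
    (htop : ∀ b, b + 1 < k + 2 → T (k+2) (b+1) = monomialOp (k+2) (b+1) π hπ c)
    (hrec : ∀ m b, k + 2 ≤ m → b + 1 < m + 1 →
      T (m+1) (b+1) = iminus m b ∘ₗ T m b ∘ₗ pminus m b
        + izero m (b+1) ∘ₗ T m (b+1) ∘ₗ pzero m (b+1))
    {n a : ℕ} (hn : k + 2 ≤ n) (ha : a ≤ n) :
    T n a = monomialOp n a π (fun i hi => hπ i (hn.trans hi)) c := by
  induction n, hn using Nat.le_induction generalizing a with
  | base =>
    rcases a with _ | b
    · exact hbase _ 0 le_rfl (Or.inl rfl)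
    · rcases ha.lt_or_eq with h | h
      · exact htop b h
      · exact hbase _ _ le_rfl (Or.inr h)
  | succ m hm ih =>
    rcases a with _ | b
    · exact hbase _ 0 (by omega) (Or.inl rfl)
    · rcases ha.lt_or_eq with h | h
      · rw [hrec m b hm h, ih (by omega), ih (by omega),
          monomialOp_succ_succ _ _ (hc m · hm)]
      · exact hbase _ _ (by omega) (Or.inr h)

def moveWeight (i j : ℕ) (s : Finset ℕ) : A := if i ∈ s ∧ j ∉ s then 1 else 0

def kWeight (x : A) (k : ℕ) (s : Finset ℕ) : A :=
  (if k + 1 ∈ s then x else 1) * (if k ∈ s then x⁻¹ else 1)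

lemma XpOp_eq_monomialOp {n a k : ℕ} (hk : k + 2 ≤ n) (ha : a ≤ n) :
    XpOp n a (k+1) = monomialOp n a (Equiv.swap k (k+1))
      (fun i hi => swap_apply_of_add_two_le k i (hk.trans hi)) (moveWeight (k+1) k) := by
  refine eq_monomialOp_of_recursion (swap_apply_of_add_two_le k) (fun m s hm => ?_)
    (fun n a => XpOp n a (k+1)) ?_ ?_ ?_ hk ha
  · simp [moveWeight, mem_erase, show k + 1 ≠ m by omega, show k ≠ m by omega]
  · intro n a hn ha
    obtain ⟨m, rfl⟩ : ∃ m, n = m + 2 := ⟨n - 2, by omega⟩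
    rcases ha with rfl | rfl
    · rw [monomialOp_eq_smul_one _ (x := 0) fun s => by simp [moveWeight, BS.coe_eq_empty]]
      simp [XpOp]
    · rw [monomialOp_eq_smul_one _ (x := 0) fun s => by
        simp [moveWeight, BS.coe_eq_range, show k < m + 2 by omega, show k + 1 < m + 2 by omega]]
      simp [XpOp]
  · intro b hb
    refine LinearMap.ext fun f => funext fun s => ?_
    simp only [XpOp, if_neg (show b + 1 ≠ k + 2 by omega), if_true, LinearMap.comp_apply,
      iminus, izero, pminus, pzero, LinearMap.coe_mk, AddHom.coe_mk, monomialOp_apply, moveWeight]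
    by_cases h1 : k + 1 ∈ s.1
    · by_cases h0 : k ∈ s.1
      · simp [h1, h0]
      · simp only [h1, h0, mem_erase, and_false, and_self, dite_true, dite_false, ite_true,
          not_false_eq_true, one_mul]
        refine congrArg f (Subtype.ext ?_)
        rw [BS.coe_perm, Equiv.swap_comm, map_swap_of_mem_of_notMem h1 h0]
    · simp [h1]
  · intro m b hm hb
    obtain ⟨m, rfl⟩ : ∃ m', m = m' + 1 := ⟨m - 1, by omega⟩
    rw [XpOp, if_neg (by omega), if_neg (by omega)]

lemma XmOp_eq_monomialOp {n a k : ℕ} (hk : k + 2 ≤ n) (ha : a ≤ n) :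
    XmOp n a (k+1) = monomialOp n a (Equiv.swap k (k+1))
      (fun i hi => swap_apply_of_add_two_le k i (hk.trans hi)) (moveWeight k (k+1)) := by
  refine eq_monomialOp_of_recursion (swap_apply_of_add_two_le k) (fun m s hm => ?_)
    (fun n a => XmOp n a (k+1)) ?_ ?_ ?_ hk ha
  · simp [moveWeight, mem_erase, show k + 1 ≠ m by omega, show k ≠ m by omega]
  · intro n a hn ha
    obtain ⟨m, rfl⟩ : ∃ m, n = m + 2 := ⟨n - 2, by omega⟩
    rcases ha with rfl | rfl
    · rw [monomialOp_eq_smul_one _ (x := 0) fun s => by simp [moveWeight, BS.coe_eq_empty]]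
      simp [XmOp]
    · rw [monomialOp_eq_smul_one _ (x := 0) fun s => by
        simp [moveWeight, BS.coe_eq_range, show k < m + 2 by omega, show k + 1 < m + 2 by omega]]
      simp [XmOp]
  · intro b hb
    refine LinearMap.ext fun f => funext fun s => ?_
    simp only [XmOp, if_neg (show b + 1 ≠ k + 2 by omega), if_true, LinearMap.comp_apply,
      iminus, izero, pminus, pzero, LinearMap.coe_mk, AddHom.coe_mk, monomialOp_apply, moveWeight]
    by_cases h1 : k + 1 ∈ s.1
    · simp [h1]
    · by_cases h0 : k ∈ s.1
      · simp only [h1, h0, dite_true, dite_false, and_self, ite_true, not_false_eq_true,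
          one_mul]
        refine congrArg f (Subtype.ext ?_)
        rw [BS.coe_perm, map_swap_of_mem_of_notMem h0 h1]
      · simp [h1, h0]
  · intro m b hm hb
    obtain ⟨m, rfl⟩ : ∃ m', m = m' + 1 := ⟨m - 1, by omega⟩
    rw [XmOp, if_neg (by omega), if_neg (by omega)]

lemma KOp_eq_monomialOp {n a k : ℕ} (hk : k + 2 ≤ n) (ha : a ≤ n) :
    KOp n a (k+1) = monomialOp n a (Equiv.refl ℕ) (fun i _ => Equiv.refl_apply i)
      (kWeight qq k) := by
  refine eq_monomialOp_of_recursion (fun i _ => Equiv.refl_apply i) (fun m s hm => ?_)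
    (fun n a => KOp n a (k+1)) ?_ ?_ ?_ hk ha
  · simp [kWeight, mem_erase, show k + 1 ≠ m by omega, show k ≠ m by omega]
  · intro n a hn ha
    obtain ⟨m, rfl⟩ : ∃ m, n = m + 2 := ⟨n - 2, by omega⟩
    rcases ha with rfl | rfl
    · rw [monomialOp_eq_smul_one _ (x := 1) fun s => by simp [kWeight, BS.coe_eq_empty]]
      simp [KOp]
    · rw [monomialOp_eq_smul_one _ (x := 1) fun s => by
        simp [kWeight, BS.coe_eq_range, qq_ne_zero, show k < m + 2 by omega,
          show k + 1 < m + 2 by omega]]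
      simp [KOp]
  · intro b hb
    refine LinearMap.ext fun f => funext fun s => ?_
    simp only [KOp, if_neg (show b + 1 ≠ k + 2 by omega), if_true, LinearMap.comp_apply,
      LinearMap.add_apply, Pi.add_apply, iminus, izero, pminus, pzero, diagOp, LinearMap.coe_mk,
      AddHom.coe_mk, monomialOp_apply, kWeight, BS.perm_refl]
    by_cases h1 : k + 1 ∈ s.1 <;> by_cases h0 : k ∈ s.1 <;> simp [h1, h0, qq_ne_zero]
  · intro m b hm hb
    obtain ⟨m, rfl⟩ : ∃ m', m = m' + 1 := ⟨m - 1, by omega⟩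
    rw [KOp, if_neg (by omega), if_neg (by omega)]

lemma KinvOp_eq_monomialOp {n a k : ℕ} (hk : k + 2 ≤ n) (ha : a ≤ n) :
    KinvOp n a (k+1) = monomialOp n a (Equiv.refl ℕ) (fun i _ => Equiv.refl_apply i)
      (kWeight qq⁻¹ k) := by
  refine eq_monomialOp_of_recursion (fun i _ => Equiv.refl_apply i) (fun m s hm => ?_)
    (fun n a => KinvOp n a (k+1)) ?_ ?_ ?_ hk ha
  · simp [kWeight, mem_erase, show k + 1 ≠ m by omega, show k ≠ m by omega]
  · intro n a hn ha
    obtain ⟨m, rfl⟩ : ∃ m, n = m + 2 := ⟨n - 2, by omega⟩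
    rcases ha with rfl | rfl
    · rw [monomialOp_eq_smul_one _ (x := 1) fun s => by simp [kWeight, BS.coe_eq_empty]]
      simp [KinvOp]
    · rw [monomialOp_eq_smul_one _ (x := 1) fun s => by
        simp [kWeight, BS.coe_eq_range, qq_ne_zero, show k < m + 2 by omega,
          show k + 1 < m + 2 by omega]]
      simp [KinvOp]
  · intro b hb
    refine LinearMap.ext fun f => funext fun s => ?_
    simp only [KinvOp, if_neg (show b + 1 ≠ k + 2 by omega), if_true, LinearMap.comp_apply,
      LinearMap.add_apply, Pi.add_apply, iminus, izero, pminus, pzero, diagOp, LinearMap.coe_mk,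
      AddHom.coe_mk, monomialOp_apply, kWeight, BS.perm_refl]
    by_cases h1 : k + 1 ∈ s.1 <;> by_cases h0 : k ∈ s.1 <;> simp [h1, h0, qq_ne_zero]
  · intro m b hm hb
    obtain ⟨m, rfl⟩ : ∃ m', m = m' + 1 := ⟨m - 1, by omega⟩
    rw [KinvOp, if_neg (by omega), if_neg (by omega)]

/-- `-dmapExponent n s` is the number of pairs `i < j < n` with `i ∈ s` and `j ∉ s`. -/
def dmapExponent (n : ℕ) (s : Finset ℕ) : ℤ :=
  ∑ i ∈ s, (i : ℤ) + ((#s).choose 2 : ℤ) - #s * ((n : ℤ) - 1)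

def dmapCoeff (n : ℕ) (s : Finset ℕ) : A := (-qq) ^ dmapExponent n s

lemma dmapExponent_succ (n : ℕ) (s : Finset ℕ) :
    dmapExponent (n+1) s = dmapExponent n s - #s := by
  simp only [dmapExponent]
  push_cast
  ring

lemma dmapExponent_succ_insert {n : ℕ} {s : Finset ℕ} (hn : n ∉ s) :
    dmapExponent (n+1) (insert n s) = dmapExponent n s := by
  simp only [dmapExponent, sum_insert hn, card_insert_of_notMem hn, Nat.choose_succ_succ',
    Nat.choose_one_right]
  push_cast
  ring

lemma dmapExponent_range (n : ℕ) : dmapExponent n (range n) = 0 := by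
  induction n with
  | zero => simp [dmapExponent]
  | succ n ih => rw [range_add_one, dmapExponent_succ_insert notMem_range_self, ih]

lemma dmapExponent_map_swap {n k : ℕ} {s : Finset ℕ} (hk : k ∈ s) (hk1 : k + 1 ∉ s) :
    dmapExponent n (s.map (Equiv.swap k (k+1)).toEmbedding) = dmapExponent n s + 1 := by
  have hsum : ∑ i ∈ s, ((Equiv.swap k (k+1) i : ℕ) : ℤ) = ∑ i ∈ s, (i : ℤ) + 1 := by
    rw [← sub_eq_iff_eq_add', ← sum_sub_distrib, sum_eq_single_of_mem k hk]
    · simp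
    · intro i hi hik
      rw [Equiv.swap_apply_of_ne_of_ne hik (by rintro rfl; exact hk1 hi), sub_self]
  simp only [dmapExponent, sum_map, card_map, Equiv.coe_toEmbedding, hsum]
  ring

lemma dmapCoeff_succ (n : ℕ) (s : Finset ℕ) :
    dmapCoeff (n+1) s = ((-qq) ^ #s)⁻¹ * dmapCoeff n s := by
  rw [dmapCoeff, dmapCoeff, dmapExponent_succ, zpow_sub₀ (neg_ne_zero.mpr qq_ne_zero),
    zpow_natCast, div_eq_inv_mul]

lemma dmapCoeff_succ_insert {n : ℕ} {s : Finset ℕ} (hn : n ∉ s) :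
    dmapCoeff (n+1) (insert n s) = dmapCoeff n s := by
  rw [dmapCoeff, dmapCoeff, dmapExponent_succ_insert hn]

lemma dmapCoeff_map_swap {n k : ℕ} {s : Finset ℕ} (hk : k ∈ s) (hk1 : k + 1 ∉ s) :
    dmapCoeff n (s.map (Equiv.swap k (k+1)).toEmbedding) = -qq * dmapCoeff n s := by
  rw [dmapCoeff, dmapCoeff, dmapExponent_map_swap hk hk1,
    zpow_add_one₀ (neg_ne_zero.mpr qq_ne_zero), mul_comm]

lemma dtriv_apply_of_unique {n a c : ℕ} [Unique (BS n a)] [Unique (BS n c)] (hac : a + c = n)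
    (h : dmapCoeff n (default : BS n a).1 = 1) (v : V n a) (w : V n c) :
    dtriv n a c v w = ∑ s, dmapCoeff n s.1 * (v s * w (s.compl hac)) := by
  simp [dtriv, sumF, h, Subsingleton.elim (BS.compl hac default) default]

theorem dmap_apply (n a c : ℕ) (hac : a + c = n) (v : V n a) (w : V n c) :
    dmap n a c v w = ∑ s, dmapCoeff n s.1 * (v s * w (s.compl hac)) := by
  induction n generalizing a c with
  | zero =>
    obtain ⟨rfl, rfl⟩ : a = 0 ∧ c = 0 := by omega
    exact dtriv_apply_of_unique hac (by simp [BS.coe_eq_empty, dmapCoeff, dmapExponent]) v w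
  | succ n ih =>
    rcases a with _ | a
    · obtain rfl : c = n + 1 := by omega
      exact dtriv_apply_of_unique hac (by simp [BS.coe_eq_empty, dmapCoeff, dmapExponent]) v w
    by_cases ha : a + 1 = n + 1
    · obtain ⟨rfl, rfl⟩ : a = n ∧ c = 0 := by omega
      rw [dmap, if_pos ha]
      exact dtriv_apply_of_unique hac (by simp [BS.coe_eq_range, dmapCoeff, dmapExponent_range])
        v w
    obtain ⟨c, rfl⟩ : ∃ c', c = c' + 1 := ⟨c - 1, by omega⟩
    simp only [dmap, if_neg ha, LinearMap.add_apply, LinearMap.comp_apply,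
      LinearMap.dualMap_apply, LinearMap.smul_apply, smul_eq_mul]
    rw [ih a (c+1) (by omega), ih (a+1) c (by omega), BS.sum_succ_succ, mul_sum]
    congr 1 <;> refine sum_congr rfl fun t _ => ?_
    · rw [BS.compl_consTop (by omega), BS.consTop,
        dmapCoeff_succ_insert fun h => by simpa using t.2.1 h]
      rfl
    · rw [BS.compl_castSucc (by omega), BS.castSucc, dmapCoeff_succ, t.2.2, mul_assoc]
      rfl

theorem dmap_monomialOp {n a b : ℕ} (hab : a + b = n) {π : Equiv.Perm ℕ}
    (hπ : ∀ i, n ≤ i → π i = i) (hinv : Function.Involutive π) {c c' : Finset ℕ → A}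
    (h : ∀ s : BS n a,
      dmapCoeff n (s.1.map π.toEmbedding) * c (s.1.map π.toEmbedding)
        = dmapCoeff n s.1 * c' (range n \ s.1))
    {T : Module.End A (V n b)} (hT : T = monomialOp n b π hπ c') (v : V n a) (w : V n b) :
    dmap n a b (monomialOp n a π hπ c v) w = dmap n a b v (T w) := by
  subst hT
  rw [dmap_apply n a b hab, dmap_apply n a b hab, ← Equiv.sum_comp (BS.perm π hπ)]
  refine sum_congr rfl fun s _ => ?_
  have hs := h s
  simp only [monomialOp_apply, BS.perm_perm hπ hinv, BS.compl_perm, BS.coe_perm,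
    BS.coe_compl] at hs ⊢
  linear_combination (v s * w (BS.perm π hπ (BS.compl hab s))) * hs

lemma kWeight_compl {x : A} (hx : x ≠ 0) {n k : ℕ} (hk : k + 2 ≤ n) (s : Finset ℕ) :
    kWeight x⁻¹ k (range n \ s) = kWeight x k s := by
  have hk0 : k < n := by omega
  have hk1 : k + 1 < n := by omega
  by_cases h1 : k + 1 ∈ s <;> by_cases h0 : k ∈ s <;> simp [kWeight, h1, h0, hx, hk0, hk1]

theorem dmap_KOp {n a b k : ℕ} (hab : a + b = n) (hk : k + 2 ≤ n) (v : V n a) (w : V n b) :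
    dmap n a b (KOp n a (k+1) v) w = dmap n a b v (KinvOp n b (k+1) w) := by
  rw [KOp_eq_monomialOp hk (by omega)]
  refine dmap_monomialOp hab _ (fun _ => rfl) (fun s => ?_)
    (KinvOp_eq_monomialOp hk (by omega)) v w
  rw [Equiv.refl_toEmbedding, map_refl, kWeight_compl qq_ne_zero hk]

theorem dmap_KinvOp {n a b k : ℕ} (hab : a + b = n) (hk : k + 2 ≤ n) (v : V n a) (w : V n b) :
    dmap n a b (KinvOp n a (k+1) v) w = dmap n a b v (KOp n b (k+1) w) := by
  rw [KinvOp_eq_monomialOp hk (by omega)]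
  refine dmap_monomialOp hab _ (fun _ => rfl) (fun s => ?_)
    (KOp_eq_monomialOp hk (by omega)) v w
  rw [Equiv.refl_toEmbedding, map_refl, ← kWeight_compl (inv_ne_zero qq_ne_zero) hk, inv_inv]

theorem dmap_XpOp {n a b k : ℕ} (hab : a + b = n) (hk : k + 2 ≤ n) (v : V n a) (w : V n b) :
    dmap n a b (XpOp n a (k+1) v) w = -dmap n a b v (XpOp n b (k+1) (KinvOp n b (k+1) w)) := by
  rw [XpOp_eq_monomialOp hk (by omega), ← map_neg]
  refine dmap_monomialOp hab _ (Equiv.swap_apply_self k (k+1))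
    (T := -(XpOp n b (k+1) ∘ₗ KinvOp n b (k+1)))
    (c' := fun u =>
      -(moveWeight (k+1) k u * kWeight qq⁻¹ k (u.map (Equiv.swap k (k+1)).toEmbedding)))
    (fun s => ?_) ?_ v w
  · have hk0 : k < n := by omega
    have hk1 : k + 1 < n := by omega
    by_cases h0 : k ∈ s.1 <;> by_cases h1 : k + 1 ∈ s.1
    · simp [moveWeight, mem_map_equiv, h0, h1]
    · rw [dmapCoeff_map_swap h0 h1]
      simp [moveWeight, kWeight, mem_map_equiv, h0, h1, hk0, hk1, mul_comm]
    · simp [moveWeight, mem_map_equiv, h0, h1]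
    · simp [moveWeight, mem_map_equiv, h0, h1, hk0]
  · refine LinearMap.ext fun f => funext fun u => ?_
    simp [XpOp_eq_monomialOp hk (by omega : b ≤ n), KinvOp_eq_monomialOp hk (by omega : b ≤ n),
      mul_assoc]

theorem dmap_XmOp {n a b k : ℕ} (hab : a + b = n) (hk : k + 2 ≤ n) (v : V n a) (w : V n b) :
    dmap n a b (XmOp n a (k+1) v) w = -dmap n a b v (KOp n b (k+1) (XmOp n b (k+1) w)) := by
  rw [XmOp_eq_monomialOp hk (by omega), ← map_neg]
  refine dmap_monomialOp hab _ (Equiv.swap_apply_self k (k+1))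
    (T := -(KOp n b (k+1) ∘ₗ XmOp n b (k+1)))
    (c' := fun u => -(kWeight qq k u * moveWeight k (k+1) u)) (fun s => ?_) ?_ v w
  · have hk0 : k < n := by omega
    have hk1 : k + 1 < n := by omega
    by_cases h0 : k ∈ s.1 <;> by_cases h1 : k + 1 ∈ s.1
    · simp [moveWeight, mem_map_equiv, h0, h1]
    · simp [moveWeight, mem_map_equiv, h0, h1]
    · have hswap := dmapCoeff_map_swap (n := n) (k := k)
        (s := s.1.map (Equiv.swap k (k+1)).toEmbedding)
        (by simpa [mem_map_equiv] using h1) (by simpa [mem_map_equiv] using h0)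
      rw [map_map, ← Equiv.trans_toEmbedding, Equiv.swap_swap, Equiv.refl_toEmbedding,
        map_refl] at hswap
      simp [moveWeight, kWeight, mem_map_equiv, h0, h1, hk0, hk1, hswap, mul_comm qq,
        qq_ne_zero]
    · simp [moveWeight, mem_map_equiv, h0, h1, hk1]
  · refine LinearMap.ext fun f => funext fun u => ?_
    simp [XmOp_eq_monomialOp hk (by omega : b ≤ n), KOp_eq_monomialOp hk (by omega : b ≤ n),
      mul_assoc]

end Equivariance

theorem statement7_general (n : ℕ) (a : ℕ) (ha : a ≤ n)
    (ρ : Uq (n-1) →ₐ[A] Module.End A (V n a))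
    (hρK : ∀ i : Fin (n-1), ρ (Uq.K i) = KOp n a ((i : ℕ)+1))
    (hρKinv : ∀ i : Fin (n-1), ρ (Uq.Kinv i) = KinvOp n a ((i : ℕ)+1))
    (hρXp : ∀ i : Fin (n-1), ρ (Uq.Xp i) = XpOp n a ((i : ℕ)+1))
    (hρXm : ∀ i : Fin (n-1), ρ (Uq.Xm i) = XmOp n a ((i : ℕ)+1))
    (ρd : Uq (n-1) →ₐ[A] Module.End A (Module.Dual A (V n (n-a))))
    (hρdK : ∀ i : Fin (n-1),
      ρd (Uq.K i) = (KinvOp n (n-a) ((i : ℕ)+1)).dualMap)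
    (hρdKinv : ∀ i : Fin (n-1),
      ρd (Uq.Kinv i) = (KOp n (n-a) ((i : ℕ)+1)).dualMap)
    (hρdXp : ∀ i : Fin (n-1),
      ρd (Uq.Xp i) = -(XpOp n (n-a) ((i : ℕ)+1) ∘ₗ KinvOp n (n-a) ((i : ℕ)+1)).dualMap)
    (hρdXm : ∀ i : Fin (n-1),
      ρd (Uq.Xm i) = -(KOp n (n-a) ((i : ℕ)+1) ∘ₗ XmOp n (n-a) ((i : ℕ)+1)).dualMap) :
    ∀ (Z : Uq (n-1)) (v : V n a),
      dmap n a (n-a) (ρ Z v) = ρd Z (dmap n a (n-a) v) := by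
  have hab : a + (n - a) = n := by omega
  have hk (i : Fin (n-1)) : (i : ℕ) + 2 ≤ n := by omega
  intro Z
  obtain ⟨x, rfl⟩ := RingQuot.mkAlgHom_surjective A (uqRel (n-1)) Z
  induction x using FreeAlgebra.induction with
  | grade0 r => simp [Algebra.algebraMap_eq_smul_one]
  | grade1 g =>
    intro v
    refine LinearMap.ext fun w => ?_
    rcases g with i | i | i | i
    · change dmap n a (n-a) (ρ (Uq.K i) v) w = ρd (Uq.K i) _ w
      rw [hρK, hρdK]
      exact dmap_KOp hab (hk i) v w
    · change dmap n a (n-a) (ρ (Uq.Kinv i) v) w = ρd (Uq.Kinv i) _ w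
      rw [hρKinv, hρdKinv]
      exact dmap_KinvOp hab (hk i) v w
    · change dmap n a (n-a) (ρ (Uq.Xp i) v) w = ρd (Uq.Xp i) _ w
      rw [hρXp, hρdXp]
      exact dmap_XpOp hab (hk i) v w
    · change dmap n a (n-a) (ρ (Uq.Xm i) v) w = ρd (Uq.Xm i) _ w
      rw [hρXm, hρdXm]
      exact dmap_XmOp hab (hk i) v w
  | mul x y hx hy => intro v; simp [hx, hy]
  | add x y hx hy => intro v; simp [hx, hy]

/-- the map `d_{a,n} : V_a^n → (V_{n-a}^n)^*` is `U_q(sl_n)`-equivariant: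
`d_{a,n}(Z·v) = Z·d_{a,n}(v)` for all `Z ∈ U_q(sl_n)`, where `V_a^n` carries the recursively
defined action and `(V_{n-a}^n)^*` carries the antipode-twisted dual module structure
(`Z·f = f ∘ S(Z)`, so the generators act by the dual maps appearing in the hypotheses on
`ρd` below). -/
theorem statement7 (n : ℕ) (hn : 1 ≤ n) (a : ℕ) (ha : a ≤ n)
    (ρ : Uq (n-1) →ₐ[A] Module.End A (V n a))
    (hρK : ∀ i : Fin (n-1), ρ (Uq.K i) = KOp n a ((i : ℕ)+1))
    (hρKinv : ∀ i : Fin (n-1), ρ (Uq.Kinv i) = KinvOp n a ((i : ℕ)+1))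
    (hρXp : ∀ i : Fin (n-1), ρ (Uq.Xp i) = XpOp n a ((i : ℕ)+1))
    (hρXm : ∀ i : Fin (n-1), ρ (Uq.Xm i) = XmOp n a ((i : ℕ)+1))
    (ρd : Uq (n-1) →ₐ[A] Module.End A (Module.Dual A (V n (n-a))))
    (hρdK : ∀ i : Fin (n-1),
      ρd (Uq.K i) = (KinvOp n (n-a) ((i : ℕ)+1)).dualMap)
    (hρdKinv : ∀ i : Fin (n-1),
      ρd (Uq.Kinv i) = (KOp n (n-a) ((i : ℕ)+1)).dualMap)
    (hρdXp : ∀ i : Fin (n-1),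
      ρd (Uq.Xp i) = -(XpOp n (n-a) ((i : ℕ)+1) ∘ₗ KinvOp n (n-a) ((i : ℕ)+1)).dualMap)
    (hρdXm : ∀ i : Fin (n-1),
      ρd (Uq.Xm i) = -(KOp n (n-a) ((i : ℕ)+1) ∘ₗ XmOp n (n-a) ((i : ℕ)+1)).dualMap) :
    ∀ (Z : Uq (n-1)) (v : V n a),
      dmap n a (n-a) (ρ Z v) = ρd Z (dmap n a (n-a) v) :=
  statement7_general n a ha ρ hρK hρKinv hρXp hρXm ρd hρdK hρdKinv hρdXp hρdXm

end
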